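/- Let q ≥ 3 be a prime power. The connected component H(q) of the identity in the graph G'(q) = Cay(GL(2,q), ops(T')) with T' = ([2],{(1,2)}) has vertex set exactly the set of matrices of the form [[α^i, 0],[α^j·a, α^j]] for i,j ∈ {0,...,q−2} and a ∈ F_q, where α is a fixed generator of F_q^×. -/

import Mathlib

open Matrix Finset

/-- A graph is Hamilton connected if any two distinct vertices are joined by a Hamilton path. -/
def HamConn {V : Type*} [DecidableEq V] (G : SimpleGraph V) : Prop :=
  ∀ x y : V, x ≠ y → ∃ p : G.Walk x y, p.IsHamiltonian

/-- A bipartite graph is Hamilton laceable: there is a proper 2-coloring such that any two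
vertices of different colors are joined by a Hamilton path. -/
def HamLaceable {V : Type*} [DecidableEq V] (G : SimpleGraph V) : Prop :=
  ∃ c : V → Bool, (∀ ⦃x y⦄, G.Adj x y → c x ≠ c y) ∧
    ∀ x y : V, c x ≠ c y → ∃ p : G.Walk x y, p.IsHamiltonian

/-- The undirected Cayley graph of a group with connection set `S` (acting on the left). -/
def cayley {G : Type*} [Group G] (S : Set G) : SimpleGraph G :=
  SimpleGraph.fromRel (fun x y => ∃ s ∈ S, y = s * x)

/-- The set of row operations specified by a transition graph `E` on `[n]` together with
row multiplications/divisions by `α`: elementary matrices `A_{ij}`, `A_{ij}⁻¹` for edges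
`(i,j)` of `E`, and `M_i`, `M_i⁻¹` for all `i`. -/
def ops (n : ℕ) (F : Type*) [Field F] (E : Fin n → Fin n → Prop) (α : F) :
    Set (Matrix.GeneralLinearGroup (Fin n) F) :=
  {A | (∃ i j, E i j ∧ ((A : Matrix (Fin n) (Fin n) F) = 1 + Matrix.single j i 1 ∨
        (A : Matrix (Fin n) (Fin n) F) = 1 + Matrix.single j i (-1))) ∨
      (∃ i, (A : Matrix (Fin n) (Fin n) F) = 1 + Matrix.single i i (α - 1) ∨
        (A : Matrix (Fin n) (Fin n) F) = 1 + Matrix.single i i (α⁻¹ - 1))}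

/-- Bypass transition graphs: a single vertex, or obtained from a bypass transition graph
on `[n-1]` by adding the vertex `n` with an in-edge from some `i ∈ [n-1]` and an out-edge
to some `j ∈ [n-1]`. -/
inductive IsBypass : (n : ℕ) → (Fin n → Fin n → Prop) → Prop
  | single (E : Fin 1 → Fin 1 → Prop) : IsBypass 1 E
  | step (n : ℕ) (E : Fin (n + 1) → Fin (n + 1) → Prop)
      (hin : ∃ i : Fin n, E i.castSucc (Fin.last n))
      (hout : ∃ j : Fin n, E (Fin.last n) j.castSucc)
      (hrec : IsBypass n (fun a b => E a.castSucc b.castSucc)) :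
      IsBypass (n + 1) E

/-- The transition graph `T' = ([2], {(1,2)})`. -/
def Tonly12 : Fin 2 → Fin 2 → Prop := fun i j => i = 0 ∧ j = 1

/-!
Right multiplication is an automorphism of a left Cayley graph, so the component of the identity
is the subgroup generated by the connection set. Every generator in `ops(T')` is lower triangular,
and conversely the lower triangular group is generated by them: `diag(α, 1)` and `diag(1, α)`
generate all invertible diagonal matrices, and for `y ≠ 0`
`[[x, 0], [y, z]] = diag(x / y, 1) · [[1, 0], [1, 1]] · diag(y, z)`. Finally, every nonzero
element of `F_q` is `α ^ m` with `m < q - 1`.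
-/

section Cayley

variable {G : Type*} [Group G] {S : Set G}

theorem cayley_reachable_mul_left {s : G} (hs : s ∈ S) (x : G) :
    (cayley S).Reachable x (s * x) := by
  by_cases h : s * x = x
  · rw [h]
  · exact SimpleGraph.Adj.reachable <|
      (SimpleGraph.fromRel_adj _ _ _).mpr ⟨Ne.symm h, Or.inl ⟨s, hs, rfl⟩⟩

theorem cayley_reachable_mul_right {x y : G} (h : (cayley S).Reachable x y) (g : G) :
    (cayley S).Reachable (x * g) (y * g) := by
  refine h.map (G' := cayley S) ⟨(· * g), fun {x y} hadj => ?_⟩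
  obtain ⟨hne, hxy⟩ := (SimpleGraph.fromRel_adj _ _ _).mp hadj
  refine (SimpleGraph.fromRel_adj _ _ _).mpr ⟨fun he => hne (mul_right_cancel he), ?_⟩
  rcases hxy with ⟨s, hs, rfl⟩ | ⟨s, hs, rfl⟩
  · exact Or.inl ⟨s, hs, mul_assoc s x g⟩
  · exact Or.inr ⟨s, hs, mul_assoc s y g⟩

theorem cayley_reachable_one_iff_mem_closure {g : G} :
    (cayley S).Reachable 1 g ↔ g ∈ Subgroup.closure S := by
  constructor
  · rw [SimpleGraph.reachable_iff_reflTransGen]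
    intro h
    induction h with
    | refl => exact Subgroup.one_mem _
    | tail _ hadj ih =>
      rcases ((SimpleGraph.fromRel_adj _ _ _).mp hadj).2 with ⟨s, hs, rfl⟩ | ⟨s, hs, hx⟩
      · exact Subgroup.mul_mem _ (Subgroup.subset_closure hs) ih
      · rw [eq_inv_mul_iff_mul_eq.mpr hx.symm]
        exact Subgroup.mul_mem _ (Subgroup.inv_mem _ (Subgroup.subset_closure hs)) ih
  · intro h
    induction h using Subgroup.closure_induction with
    | mem s hs => simpa using cayley_reachable_mul_left hs 1
    | one => rfl
    | mul x y _ _ hx hy => exact hy.trans (by simpa using cayley_reachable_mul_right hx y)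
    | inv x _ hx => simpa using (cayley_reachable_mul_right hx x⁻¹).symm

end Cayley

namespace Matrix.GeneralLinearGroup

section LowerTriangular

variable (R : Type*) [CommRing R]

def lowerTriangular : Subgroup (GL (Fin 2) R) where
  carrier := {A | (A : Matrix (Fin 2) (Fin 2) R) 0 1 = 0}
  one_mem' := by simp
  mul_mem' {A B} hA hB := by
    simp_all [Units.val_mul, mul_apply, Fin.sum_univ_two]
  inv_mem' {A} hA := by
    simp_all [coe_units_inv, inv_def, adjugate_fin_two]

variable {R}

theorem mem_lowerTriangular {A : GL (Fin 2) R} :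
    A ∈ lowerTriangular R ↔ (A : Matrix (Fin 2) (Fin 2) R) 0 1 = 0 := Iff.rfl

theorem det_of_mem_lowerTriangular {A : GL (Fin 2) R} (hA : A ∈ lowerTriangular R) :
    (A : Matrix (Fin 2) (Fin 2) R).det = A 0 0 * A 1 1 := by
  rw [det_fin_two, mem_lowerTriangular.mp hA, zero_mul, sub_zero]

end LowerTriangular

variable {n : Type*} [Fintype n] [DecidableEq n] {R : Type*} [CommRing R]

def diagonalUnits : (n → Rˣ) →* GL n R :=
  (Units.map (diagonalRingHom n R).toMonoidHom).comp MulEquiv.piUnits.symm.toMonoidHom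

theorem coe_diagonalUnits (d : n → Rˣ) :
    (diagonalUnits d : Matrix n n R) = diagonal fun i => (d i : R) := rfl

end Matrix.GeneralLinearGroup

open Matrix.GeneralLinearGroup

section Ops

variable {F : Type*} [Field F]

theorem diagonalUnits_mem_closure_ops {n : ℕ} {E : Fin n → Fin n → Prop} {α : Fˣ}
    (hα : ∀ x : Fˣ, x ∈ Subgroup.zpowers α) (d : Fin n → Fˣ) :
    diagonalUnits d ∈ Subgroup.closure (ops n F E α) := by
  have hsingle (i : Fin n) : diagonalUnits (Pi.mulSingle i α) ∈ ops n F E α := by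
    refine Or.inr ⟨i, Or.inl ?_⟩
    rw [coe_diagonalUnits, ← diagonal_single, ← diagonal_one, diagonal_add]
    congr 1
    ext k
    by_cases hk : k = i <;> simp [hk]
  suffices hd : d ∈ (Subgroup.closure (ops n F E α)).comap diagonalUnits from hd
  rw [← Finset.univ_prod_mulSingle d]
  refine Subgroup.prod_mem _ fun i _ => ?_
  -- the units `u` with `diag(1, …, u, …, 1)` in the closure form a subgroup containing `α`
  exact (Subgroup.zpowers_le (H := ((Subgroup.closure (ops n F E α)).comap diagonalUnits).comap
    (MonoidHom.mulSingle (fun _ => Fˣ) i))).mpr (Subgroup.subset_closure (hsingle i)) (hα (d i))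

theorem ops_Tonly12_subset_lowerTriangular (α : F) : ops 2 F Tonly12 α ⊆ lowerTriangular F := by
  rintro s (⟨i, j, ⟨rfl, rfl⟩, hs | hs⟩ | ⟨i, hs | hs⟩) <;> try fin_cases i
  all_goals simp [mem_lowerTriangular, hs, one_apply]

theorem lowerTriangular_le_closure_ops_Tonly12 {α : Fˣ}
    (hα : ∀ x : Fˣ, x ∈ Subgroup.zpowers α) :
    lowerTriangular F ≤ Subgroup.closure (ops 2 F Tonly12 α) := by
  intro A hA
  have hdiag := diagonalUnits_mem_closure_ops (E := Tonly12) hα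
  obtain ⟨hx, hz⟩ : A 0 0 ≠ 0 ∧ A 1 1 ≠ 0 := by
    simpa [det_of_mem_lowerTriangular hA] using A.det_ne_zero
  rw [mem_lowerTriangular] at hA
  by_cases hy : A 1 0 = 0
  · convert hdiag ![Units.mk0 _ hx, Units.mk0 _ hz]
    ext i j
    fin_cases i <;> fin_cases j <;> simp [coe_diagonalUnits, hA, hy]
  · have hT : SpecialLinearGroup.toGL (SpecialLinearGroup.transvection one_ne_zero (1 : F)) ∈
        ops 2 F Tonly12 α :=
      Or.inl ⟨0, 1, ⟨rfl, rfl⟩, Or.inl rfl⟩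
    convert mul_mem (mul_mem (hdiag ![Units.mk0 _ (div_ne_zero hx hy), 1])
      (Subgroup.subset_closure hT)) (hdiag ![Units.mk0 _ hy, Units.mk0 _ hz])
    ext i j
    fin_cases i <;> fin_cases j <;>
      simp [coe_diagonalUnits, SpecialLinearGroup.transvection_coe, mul_apply, Fin.sum_univ_two,
        one_apply, hA, hy]

theorem closure_ops_Tonly12 {α : Fˣ}
    (hα : ∀ x : Fˣ, x ∈ Subgroup.zpowers α) :
    Subgroup.closure (ops 2 F Tonly12 α) = lowerTriangular F :=
  le_antisymm ((Subgroup.closure_le _).mpr (ops_Tonly12_subset_lowerTriangular _))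
    (lowerTriangular_le_closure_ops_Tonly12 hα)

end Ops

theorem exists_pow_lt_card_eq_of_forall_mem_zpowers {G : Type*} [Group G] [Finite G] {g : G}
    (hg : ∀ x : G, x ∈ Subgroup.zpowers g) (x : G) : ∃ m < Nat.card G, g ^ m = x := by
  classical
  have := Fintype.ofFinite G
  have hx := Finset.mem_univ x
  rw [← IsCyclic.image_range_card hg] at hx
  simpa using hx

theorem mem_lowerTriangular_iff_exists_pow {F : Type*} [Field F] [Finite F] {α : Fˣ}
    (hα : ∀ x : Fˣ, x ∈ Subgroup.zpowers α) {A : GL (Fin 2) F} :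
    A ∈ lowerTriangular F ↔ ∃ i j : ℕ, i < Nat.card F - 1 ∧ j < Nat.card F - 1 ∧
      ∃ a : F,
        (A : Matrix (Fin 2) (Fin 2) F) = !![(α : F) ^ i, 0; (α : F) ^ j * a, (α : F) ^ j] := by
  constructor
  · intro hA
    obtain ⟨hx, hz⟩ : A 0 0 ≠ 0 ∧ A 1 1 ≠ 0 := by
      simpa [det_of_mem_lowerTriangular hA] using A.det_ne_zero
    obtain ⟨i, hi, hαi⟩ := exists_pow_lt_card_eq_of_forall_mem_zpowers hα (Units.mk0 _ hx)
    obtain ⟨j, hj, hαj⟩ := exists_pow_lt_card_eq_of_forall_mem_zpowers hα (Units.mk0 _ hz)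
    refine ⟨i, j, Nat.card_units F ▸ hi, Nat.card_units F ▸ hj, A 1 0 / A 1 1, ?_⟩
    rw [← Units.val_pow_eq_pow_val, ← Units.val_pow_eq_pow_val, hαi, hαj]
    ext k l
    fin_cases k <;> fin_cases l <;> simp [mem_lowerTriangular.mp hA, mul_div_cancel₀ _ hz]
  · rintro ⟨i, j, -, -, a, hA⟩
    simp [mem_lowerTriangular, hA]

theorem component_of_identity_general (q : ℕ)
    (F : Type) [Field F] [Fintype F] (hq : Fintype.card F = q)
    (α : Fˣ) (hα : ∀ x : Fˣ, x ∈ Subgroup.zpowers α) :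
    ∀ A : Matrix.GeneralLinearGroup (Fin 2) F,
      (cayley (ops 2 F Tonly12 (α : F))).Reachable 1 A ↔
      ∃ i j : ℕ, i < q - 1 ∧ j < q - 1 ∧ ∃ a : F,
        (A : Matrix (Fin 2) (Fin 2) F) = !![(α : F) ^ i, 0; (α : F) ^ j * a, (α : F) ^ j] := by
  intro A
  rw [cayley_reachable_one_iff_mem_closure, closure_ops_Tonly12 hα, ← hq,
    ← Nat.card_eq_fintype_card]
  exact mem_lowerTriangular_iff_exists_pow hα

/-- the connected component of the identity in
`G'(q) = Cay(GL(2,q), ops(T'))` with `T' = ([2],{(1,2)})` has vertex set exactly the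
matrices `[[α^i, 0],[α^j·a, α^j]]` for `i,j ∈ {0,…,q−2}` and `a ∈ F_q`. -/
theorem component_of_identity (q : ℕ) (hq3 : 3 ≤ q)
    (F : Type) [Field F] [Fintype F] [DecidableEq F] (hq : Fintype.card F = q)
    (α : Fˣ) (hα : ∀ x : Fˣ, x ∈ Subgroup.zpowers α) :
    ∀ A : Matrix.GeneralLinearGroup (Fin 2) F,
      (cayley (ops 2 F Tonly12 (α : F))).Reachable 1 A ↔
      ∃ i j : ℕ, i < q - 1 ∧ j < q - 1 ∧ ∃ a : F,
        (A : Matrix (Fin 2) (Fin 2) F) = !![(α : F) ^ i, 0; (α : F) ^ j * a, (α : F) ^ j] :=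
  component_of_identity_general q F hq α hα
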